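/- The cutoff semigroup satisfies e^{-t·Deg} f ≤ P_t^φ f ≤ P_t f for all t ≥ 0 and 0 ≤ f ≤ φ, where Deg(x) = (1/m(x)) Σ_y w(x,y) and (e^{-t·Deg}f)(x) = e^{-t·Deg(x)}f(x). -/

import Mathlib

open scoped BigOperators

/-- A locally finite weighted graph. -/
structure WeightedGraph (V : Type) where
  w : V → V → ℝ
  m : V → ℝ
  symm : ∀ x y, w x y = w y x
  loopless : ∀ x, w x x = 0
  nonneg : ∀ x y, 0 ≤ w x y
  mpos : ∀ x, 0 < m x
  locFin : ∀ x, Set.Finite {y | w x y ≠ 0}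

namespace WeightedGraph

variable {V : Type} (G : WeightedGraph V)

/-- The underlying simple graph. -/
def toSimple : SimpleGraph V where
  Adj x y := x ≠ y ∧ G.w x y ≠ 0
  symm := by
    constructor; intro x y h
    exact ⟨h.1.symm, by rw [G.symm y x]; exact h.2⟩
  loopless := by constructor; intro x h; exact h.1 rfl

/-- The combinatorial graph distance. -/
noncomputable def dist (x y : V) : ℕ := G.toSimple.dist x y

/-- The graph Laplacian. -/
noncomputable def lap (f : V → ℝ) (x : V) : ℝ :=
  (∑ᶠ y, G.w x y * (f y - f x)) / G.m x

/-- The weighted vertex degree. -/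
noncomputable def deg (x : V) : ℝ := (∑ᶠ y, G.w x y) / G.m x

/-- `f` is `1`-Lipschitz with respect to the combinatorial distance. -/
def Lip1 (f : V → ℝ) : Prop := ∀ x y, |f x - f y| ≤ (G.dist x y : ℝ)

/-- The Ollivier curvature, via the limit-free formula
`κ(x,y) = inf {∇_{xy} Δ f : f ∈ Lip(1) ∩ C_c(V), ∇_{yx} f = 1}`. -/
noncomputable def curv (x y : V) : ℝ :=
  sInf { c | ∃ f : V → ℝ, G.Lip1 f ∧ (Function.support f).Finite ∧
    f y - f x = (G.dist x y : ℝ) ∧ c = (G.lap f x - G.lap f y) / (G.dist x y : ℝ) }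

end WeightedGraph

/-- `u` is a non-negative bounded solution of the heat equation with initial datum `f`. -/
def IsHeatSolution {V : Type} (G : WeightedGraph V) (f : V → ℝ) (u : ℝ → V → ℝ) : Prop :=
  u 0 = f ∧ (∀ t x, 0 ≤ t → 0 ≤ u t x) ∧ (∃ C, ∀ t x, 0 ≤ t → u t x ≤ C) ∧
  ∀ x t, 0 ≤ t → HasDerivWithinAt (fun s => u s x) (G.lap (u t) x) (Set.Ici 0) t

/-- `P` is the minimal heat semigroup: for every non-negative bounded `f`, `t ↦ P t f` is the
smallest non-negative bounded solution of the heat equation with initial datum `f`; on signed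
bounded functions it is given by linearity from the positive and negative parts. -/
def IsHeatSemigroup {V : Type} (G : WeightedGraph V) (P : ℝ → (V → ℝ) → V → ℝ) : Prop :=
  (∀ f : V → ℝ, (∀ x, 0 ≤ f x) → (∃ C, ∀ x, f x ≤ C) →
    IsHeatSolution G f (fun t => P t f) ∧
    ∀ u, IsHeatSolution G f u → ∀ t x, 0 ≤ t → P t f x ≤ u t x) ∧
  (∀ f : V → ℝ, (∃ C, ∀ x, |f x| ≤ C) → ∀ t x,
    P t f x = P t (fun y => max (f y) 0) x - P t (fun y => max (-f y) 0) x)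

/-- The one-step cutoff operator `Q_t^φ f := (P_t f) ∧ φ`. -/
noncomputable def Qcut {V : Type} (G : WeightedGraph V) (P : ℝ → (V → ℝ) → V → ℝ)
    (φ : V → ℝ) (t : ℝ) (f : V → ℝ) : V → ℝ :=
  fun x => min (P t f x) (φ x)

/-- The cutoff semigroup `P_t^φ f := inf_{t₁+⋯+t_n = t} Q_{t₁}^φ ⋯ Q_{t_n}^φ f`. -/
noncomputable def Pcut {V : Type} (G : WeightedGraph V) (P : ℝ → (V → ℝ) → V → ℝ)
    (φ : V → ℝ) (t : ℝ) (f : V → ℝ) (x : V) : ℝ :=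
  sInf { c | ∃ l : List ℝ, (∀ s ∈ l, 0 ≤ s) ∧ l.sum = t ∧
    c = (l.foldr (fun s g => Qcut G P φ s g) f) x }

/-!
A non-negative solution of `∂ₜu = Δu` satisfies `Δu(x) ≥ -Deg(x) u(x)`, because
the neighbours contribute non-negatively; hence `e^{t Deg(x)} u(t, x)` is non-decreasing and
`P_s g ≥ e^{-s Deg} g`. Since also `φ ≥ g ≥ e^{-s Deg} g`, each cutoff step `Q_s^φ` loses at most
the factor `e^{-s Deg}`, and these factors multiply to `e^{-t Deg}` along any partition of `t`.
The upper bound comes from the trivial partition `t = t`.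
-/

namespace WeightedGraph

variable {V : Type} (G : WeightedGraph V)

lemma deg_nonneg (x : V) : 0 ≤ G.deg x :=
  div_nonneg (finsum_nonneg fun y => G.nonneg x y) (G.mpos x).le

lemma neg_deg_mul_le_lap {u : V → ℝ} (hu : ∀ y, 0 ≤ u y) (x : V) :
    -G.deg x * u x ≤ G.lap u x := by
  have hw : (Function.support (G.w x)).Finite := G.locFin x
  have hwu : (Function.support fun y => G.w x y * u y).Finite :=
    hw.subset (Function.support_mul_subset_left _ _)
  have hsplit : ∑ᶠ y, G.w x y * (u y - u x) = ∑ᶠ y, G.w x y * u y - (∑ᶠ y, G.w x y) * u x := by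
    simp only [mul_sub]
    rw [finsum_sub_distrib hwu (hw.subset (Function.support_mul_subset_left _ _)), finsum_mul]
  have hnonneg : 0 ≤ ∑ᶠ y, G.w x y * u y := finsum_nonneg fun y => mul_nonneg (G.nonneg x y) (hu y)
  rw [lap, deg, hsplit, neg_mul, div_mul_eq_mul_div, ← neg_div]
  exact div_le_div_of_nonneg_right (by linarith) (G.mpos x).le

end WeightedGraph

section HeatSolution

variable {V : Type} {G : WeightedGraph V} {g : V → ℝ} {u : ℝ → V → ℝ}

lemma IsHeatSolution.monotoneOn_exp_deg_mul (hu : IsHeatSolution G g u) (x : V) :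
    MonotoneOn (fun s => Real.exp (s * G.deg x) * u s x) (Set.Ici 0) := by
  obtain ⟨-, hpos, -, hderiv⟩ := hu
  have hF : ∀ s ∈ Set.Ici (0 : ℝ), HasDerivWithinAt (fun s => Real.exp (s * G.deg x) * u s x)
      (Real.exp (s * G.deg x) * (G.deg x * u s x + G.lap (u s) x)) (Set.Ici 0) s := fun s hs =>
    ((hasDerivAt_mul_const (G.deg x)).exp.hasDerivWithinAt.mul (hderiv x s hs)).congr_deriv
      (by ring)
  refine monotoneOn_of_hasDerivWithinAt_nonneg (convex_Ici 0)
    (f' := fun s => Real.exp (s * G.deg x) * (G.deg x * u s x + G.lap (u s) x))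
    (fun s hs => (hF s hs).continuousWithinAt) (fun s hs => ?_) fun s hs => ?_
  · exact (hF s (interior_subset hs)).mono interior_subset
  rw [interior_Ici] at hs
  have hlap := G.neg_deg_mul_le_lap (fun y => hpos s y (le_of_lt hs)) x
  exact mul_nonneg (Real.exp_pos _).le (by linarith)

lemma IsHeatSolution.exp_neg_deg_mul_le (hu : IsHeatSolution G g u) (x : V) {t : ℝ}
    (ht : 0 ≤ t) : Real.exp (-t * G.deg x) * g x ≤ u t x := by
  have hmono := hu.monotoneOn_exp_deg_mul x Set.self_mem_Ici (Set.mem_Ici.mpr ht) ht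
  simp only [zero_mul, Real.exp_zero, one_mul, hu.1] at hmono
  calc Real.exp (-t * G.deg x) * g x
      ≤ Real.exp (-t * G.deg x) * (Real.exp (t * G.deg x) * u t x) :=
        mul_le_mul_of_nonneg_left hmono (Real.exp_pos _).le
    _ = u t x := by
        rw [← mul_assoc, ← Real.exp_add, neg_mul, neg_add_cancel, Real.exp_zero, one_mul]

end HeatSolution

section Cutoff

variable {V : Type} {G : WeightedGraph V} {P : ℝ → (V → ℝ) → V → ℝ} {φ f : V → ℝ}

/-- The composition `Q_{t₁}^φ ⋯ Q_{t_n}^φ f` for `l = [t₁, …, t_n]`. -/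
noncomputable def cutoffIter (G : WeightedGraph V) (P : ℝ → (V → ℝ) → V → ℝ) (φ : V → ℝ)
    (l : List ℝ) (f : V → ℝ) : V → ℝ :=
  l.foldr (fun s g => Qcut G P φ s g) f

lemma cutoffIter_le (hfφ : ∀ x, f x ≤ φ x) (l : List ℝ) (x : V) :
    cutoffIter G P φ l f x ≤ φ x := by
  cases l with
  | nil => exact hfφ x
  | cons s l => exact min_le_right _ _

lemma exists_cutoffIter_le_const (hφ : BddAbove (Set.range φ)) (hfφ : ∀ x, f x ≤ φ x) (l : List ℝ) :
    ∃ C, ∀ x, cutoffIter G P φ l f x ≤ C :=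
  let ⟨C, hC⟩ := hφ
  ⟨C, fun x => (cutoffIter_le hfφ l x).trans (hC ⟨x, rfl⟩)⟩

lemma cutoffIter_nonneg (hP : IsHeatSemigroup G P) (hφ : BddAbove (Set.range φ))
    (hf0 : ∀ x, 0 ≤ f x) (hfφ : ∀ x, f x ≤ φ x) {l : List ℝ} (hl : ∀ s ∈ l, 0 ≤ s) (x : V) :
    0 ≤ cutoffIter G P φ l f x := by
  induction l generalizing x with
  | nil => exact hf0 x
  | cons s l ih =>
    have hg0 : ∀ y, 0 ≤ cutoffIter G P φ l f y := ih fun r hr => hl r (List.mem_cons_of_mem s hr)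
    exact le_min ((hP.1 _ hg0 (exists_cutoffIter_le_const hφ hfφ l)).1.2.1 s x (hl s List.mem_cons_self))
      ((hg0 x).trans (cutoffIter_le hfφ l x))

lemma exp_neg_deg_mul_le_Qcut (hP : IsHeatSemigroup G P) {g : V → ℝ} (hg0 : ∀ x, 0 ≤ g x)
    (hgφ : ∀ x, g x ≤ φ x) (hg : ∃ C, ∀ x, g x ≤ C) {s : ℝ} (hs : 0 ≤ s) (x : V) :
    Real.exp (-s * G.deg x) * g x ≤ Qcut G P φ s g x := by
  refine le_min ((hP.1 g hg0 hg).1.exp_neg_deg_mul_le x hs) ?_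
  have hexp : Real.exp (-s * G.deg x) ≤ 1 :=
    Real.exp_le_one_iff.mpr (mul_nonpos_of_nonpos_of_nonneg (neg_nonpos.mpr hs) (G.deg_nonneg x))
  exact (mul_le_of_le_one_left (hg0 x) hexp).trans (hgφ x)

lemma exp_neg_deg_mul_le_cutoffIter (hP : IsHeatSemigroup G P) (hφ : BddAbove (Set.range φ))
    (hf0 : ∀ x, 0 ≤ f x) (hfφ : ∀ x, f x ≤ φ x) {l : List ℝ} (hl : ∀ s ∈ l, 0 ≤ s) (x : V) :
    Real.exp (-l.sum * G.deg x) * f x ≤ cutoffIter G P φ l f x := by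
  induction l generalizing x with
  | nil => simp [cutoffIter]
  | cons s l ih =>
    have hl' : ∀ r ∈ l, 0 ≤ r := fun r hr => hl r (List.mem_cons_of_mem s hr)
    have hs : 0 ≤ s := hl s List.mem_cons_self
    calc Real.exp (-(s :: l).sum * G.deg x) * f x
        = Real.exp (-s * G.deg x) * (Real.exp (-l.sum * G.deg x) * f x) := by
          rw [List.sum_cons, ← mul_assoc, ← Real.exp_add]; ring_nf
      _ ≤ Real.exp (-s * G.deg x) * cutoffIter G P φ l f x :=
          mul_le_mul_of_nonneg_left (ih hl' x) (Real.exp_pos _).le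
      _ ≤ Qcut G P φ s (cutoffIter G P φ l f) x :=
          exp_neg_deg_mul_le_Qcut hP (cutoffIter_nonneg hP hφ hf0 hfφ hl')
            (cutoffIter_le hfφ l) (exists_cutoffIter_le_const hφ hfφ l) hs x

lemma Pcut_le_Qcut (hP : IsHeatSemigroup G P) (hφ : BddAbove (Set.range φ))
    (hf0 : ∀ x, 0 ≤ f x) (hfφ : ∀ x, f x ≤ φ x) {t : ℝ} (ht : 0 ≤ t) (x : V) :
    Pcut G P φ t f x ≤ Qcut G P φ t f x := by
  refine csInf_le ⟨0, ?_⟩ ⟨[t], by simpa using ht, by simp, rfl⟩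
  rintro c ⟨l, hl, -, rfl⟩
  exact cutoffIter_nonneg hP hφ hf0 hfφ hl x

lemma le_Pcut {t c : ℝ} (ht : 0 ≤ t) {x : V}
    (h : ∀ l : List ℝ, (∀ s ∈ l, 0 ≤ s) → l.sum = t → c ≤ cutoffIter G P φ l f x) :
    c ≤ Pcut G P φ t f x := by
  refine le_csInf ⟨_, [t], by simpa using ht, by simp, rfl⟩ ?_
  rintro _ ⟨l, hl, hsum, rfl⟩
  exact h l hl hsum

end Cutoff

theorem stmt7_general {V : Type} (G : WeightedGraph V)
    (P : ℝ → (V → ℝ) → V → ℝ) (hP : IsHeatSemigroup G P)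
    (φ : V → ℝ) (hφfin : (Function.support φ).Finite)
    (f : V → ℝ) (hf0 : ∀ x, 0 ≤ f x) (hfφ : ∀ x, f x ≤ φ x)
    (t : ℝ) (ht : 0 ≤ t) :
    ∀ x, Real.exp (-t * G.deg x) * f x ≤ Pcut G P φ t f x ∧
      Pcut G P φ t f x ≤ P t f x := by
  have hφ : BddAbove (Set.range φ) :=
    ((hφfin.image φ).insert 0).bddAbove.mono (Function.range_subset_insert_image_support φ)
  intro x
  refine ⟨le_Pcut ht fun l hl hsum => ?_,
    (Pcut_le_Qcut hP hφ hf0 hfφ ht x).trans (min_le_left _ _)⟩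
  simpa [hsum] using exp_neg_deg_mul_le_cutoffIter hP hφ hf0 hfφ hl x

/-- The cutoff semigroup satisfies `e^{-t Deg} f ≤ P_t^φ f ≤ P_t f`. -/
theorem stmt7 {V : Type} [Countable V] (G : WeightedGraph V)
    (P : ℝ → (V → ℝ) → V → ℝ) (hP : IsHeatSemigroup G P)
    (φ : V → ℝ) (hφ0 : ∀ x, 0 ≤ φ x) (hφfin : (Function.support φ).Finite)
    (f : V → ℝ) (hf0 : ∀ x, 0 ≤ f x) (hfφ : ∀ x, f x ≤ φ x)
    (t : ℝ) (ht : 0 ≤ t) :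
    ∀ x, Real.exp (-t * G.deg x) * f x ≤ Pcut G P φ t f x ∧
      Pcut G P φ t f x ≤ P t f x :=
  stmt7_general G P hP φ hφfin f hf0 hfφ t ht
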